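/- arXiv:1512.04403 — 2 statements merged into one kernel-verified Lean document; each statement's English description precedes it below -/
import Mathlib

section
/- Assume condition (PCLI1). Then for every initial distribution p on ℝ with ∫ w dp < ∞, every state x, and every threshold z ∈ ℝ: (a) F(p,z) − F(p,z⁻) = m*(z)·(G(p,z) − G(p,z⁻)); (b) f(x,z) − f(x,z⁻) = m*(z)·(g(x,z) − g(x,z⁻)); (c) g(x,x⁻) > 0 and m(x,x⁻) = m(x,x) = m*(x), i.e., f(x,x⁻) = m*(x)·g(x,x⁻). -/
open MeasureTheory ProbabilityTheory Filter Topology Set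

noncomputable section

/-- A restless bandit project: the model data (discount factor `β`, passive/active
Markov transition kernels `κ false`/`κ true`, reward `r` and resource consumption `c`),
Assumption 1 (the weighted sup-norm conditions for weight `w` and constants `M`, `γ`),
together with the threshold-policy performance metrics `F`, `G` (for `z`-policies,
active iff `x > z`), `Fm`, `Gm` (for `z⁻`-policies, active iff `x ≥ z`), and the
optimal value function `V lam` of the `lam`-price problem, each of which is the
(unique) `w`-bounded measurable solution of its fixed-point equation. -/
structure Bandit where
  β : ℝ
  κ : Bool → Kernel ℝ ℝ
  r : ℝ → Bool → ℝ
  c : ℝ → Bool → ℝ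
  w : ℝ → ℝ
  M : ℝ
  γ : ℝ
  F : ℝ → EReal → ℝ
  G : ℝ → EReal → ℝ
  Fm : ℝ → EReal → ℝ
  Gm : ℝ → EReal → ℝ
  V : ℝ → ℝ → ℝ
  hβ0 : 0 ≤ β
  hβ1 : β < 1
  hκ : ∀ a, IsMarkovKernel (κ a)
  hr_cont : ∀ a, Continuous fun x => r x a
  hc_cont : ∀ a, Continuous fun x => c x a
  hc0 : ∀ x, 0 ≤ c x false
  hc01 : ∀ x, c x false < c x true
  hw_meas : Measurable w
  hw_one : ∀ x, 1 ≤ w x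
  hM : 0 < M
  hβγ : β ≤ γ
  hγ1 : γ < 1
  hr_bd : ∀ x a, |r x a| ≤ M * w x
  hc_bd : ∀ x a, c x a ≤ M * w x
  hw_int : ∀ a x, Integrable w (κ a x)
  hw_drift : ∀ a x, β * ∫ y, w y ∂(κ a x) ≤ γ * w x
  hF_meas : ∀ z, Measurable fun x => F x z
  hG_meas : ∀ z, Measurable fun x => G x z
  hFm_meas : ∀ z, Measurable fun x => Fm x z
  hGm_meas : ∀ z, Measurable fun x => Gm x z
  hV_meas : ∀ lam, Measurable (V lam)
  hF_bdd : ∀ z, ∃ C, ∀ x, |F x z| ≤ C * w x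
  hG_bdd : ∀ z, ∃ C, ∀ x, |G x z| ≤ C * w x
  hFm_bdd : ∀ z, ∃ C, ∀ x, |Fm x z| ≤ C * w x
  hGm_bdd : ∀ z, ∃ C, ∀ x, |Gm x z| ≤ C * w x
  hV_bdd : ∀ lam, ∃ C, ∀ x, |V lam x| ≤ C * w x
  hF_eq : ∀ x z, F x z =
    r x (decide (z < (x : EReal))) +
      β * ∫ y, F y z ∂(κ (decide (z < (x : EReal))) x)
  hG_eq : ∀ x z, G x z =
    c x (decide (z < (x : EReal))) +
      β * ∫ y, G y z ∂(κ (decide (z < (x : EReal))) x)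
  hFm_eq : ∀ x z, Fm x z =
    r x (decide (z ≤ (x : EReal))) +
      β * ∫ y, Fm y z ∂(κ (decide (z ≤ (x : EReal))) x)
  hGm_eq : ∀ x z, Gm x z =
    c x (decide (z ≤ (x : EReal))) +
      β * ∫ y, Gm y z ∂(κ (decide (z ≤ (x : EReal))) x)
  hV_eq : ∀ lam x, V lam x =
    max (r x false - lam * c x false + β * ∫ y, V lam y ∂(κ false x))
        (r x true - lam * c x true + β * ∫ y, V lam y ∂(κ true x))

/-- `ν` is the Lebesgue–Stieltjes measure of the (bounded nonincreasing
right-continuous) function `h`: `ν(z₁,z₂] = h z₁ - h z₂`. -/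
def IsLSMeasureOfAnti (h : ℝ → ℝ) (ν : Measure ℝ) : Prop :=
  ∀ z₁ z₂ : ℝ, z₁ ≤ z₂ → ν (Set.Ioc z₁ z₂) = ENNReal.ofReal (h z₁ - h z₂)

/-- `ν` is the Lebesgue–Stieltjes measure of the (bounded nondecreasing
right-continuous) function `h`: `ν(z₁,z₂] = h z₂ - h z₁`. -/
def IsLSMeasureOfMono (h : ℝ → ℝ) (ν : Measure ℝ) : Prop :=
  ∀ z₁ z₂ : ℝ, z₁ ≤ z₂ → ν (Set.Ioc z₁ z₂) = ENNReal.ofReal (h z₂ - h z₁)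

/-- The real interval `(z₁, z₂] ⊆ ℝ` with extended-real endpoints. -/
def iocR (z₁ z₂ : EReal) : Set ℝ := {y : ℝ | z₁ < (y : EReal) ∧ (y : EReal) ≤ z₂}

/-- `t`-step distribution of the Markov chain with kernel `κ` and initial law `p`. -/
def kerIter (κ : Kernel ℝ ℝ) : ℕ → Measure ℝ → Measure ℝ
  | 0, p => p
  | (t + 1), p => (kerIter κ t p).bind fun x => κ x

namespace Bandit

variable (P : Bandit)

/-- Marginal reward metric `f(x,z)` of the `z`-policy. -/
def f (x : ℝ) (z : EReal) : ℝ :=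
  (P.r x true - P.r x false) +
    P.β * ((∫ y, P.F y z ∂(P.κ true x)) - ∫ y, P.F y z ∂(P.κ false x))

/-- Marginal resource metric `g(x,z)` of the `z`-policy. -/
def g (x : ℝ) (z : EReal) : ℝ :=
  (P.c x true - P.c x false) +
    P.β * ((∫ y, P.G y z ∂(P.κ true x)) - ∫ y, P.G y z ∂(P.κ false x))

/-- Marginal reward metric `f(x,z⁻)` of the `z⁻`-policy. -/
def fm (x : ℝ) (z : EReal) : ℝ :=
  (P.r x true - P.r x false) +
    P.β * ((∫ y, P.Fm y z ∂(P.κ true x)) - ∫ y, P.Fm y z ∂(P.κ false x))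

/-- Marginal resource metric `g(x,z⁻)` of the `z⁻`-policy. -/
def gm (x : ℝ) (z : EReal) : ℝ :=
  (P.c x true - P.c x false) +
    P.β * ((∫ y, P.Gm y z ∂(P.κ true x)) - ∫ y, P.Gm y z ∂(P.κ false x))

/-- Marginal productivity metric `m(x,z) = f(x,z)/g(x,z)`. -/
def m (x : ℝ) (z : EReal) : ℝ := P.f x z / P.g x z

/-- Marginal productivity metric `m(x,z⁻) = f(x,z⁻)/g(x,z⁻)`. -/
def mm (x : ℝ) (z : EReal) : ℝ := P.fm x z / P.gm x z

/-- The marginal productivity (MP) index `m*(x) = m(x,x)`. -/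
def mStar (x : ℝ) : ℝ := P.m x (x : EReal)

/-- The active action is `P_lam`-optimal at `x`. -/
def ActOpt (lam x : ℝ) : Prop :=
  P.r x false - lam * P.c x false + P.β * ∫ y, P.V lam y ∂(P.κ false x) ≤
    P.r x true - lam * P.c x true + P.β * ∫ y, P.V lam y ∂(P.κ true x)

/-- The passive action is `P_lam`-optimal at `x`. -/
def PassOpt (lam x : ℝ) : Prop :=
  P.r x true - lam * P.c x true + P.β * ∫ y, P.V lam y ∂(P.κ true x) ≤
    P.r x false - lam * P.c x false + P.β * ∫ y, P.V lam y ∂(P.κ false x)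

/-- The project is indexable with index `ν`. -/
def Indexable (ν : ℝ → ℝ) : Prop :=
  ∀ lam x, (P.ActOpt lam x ↔ lam ≤ ν x) ∧ (P.PassOpt lam x ↔ ν x ≤ lam)

/-- The `z`-policy is `P_lam`-optimal. -/
def ZPolicyOpt (z : EReal) (lam : ℝ) : Prop :=
  ∀ x, P.F x z - lam * P.G x z = P.V lam x

/-- The `z⁻`-policy is `P_lam`-optimal. -/
def ZmPolicyOpt (z : EReal) (lam : ℝ) : Prop :=
  ∀ x, P.Fm x z - lam * P.Gm x z = P.V lam x

/-- The project is strongly threshold-indexable with index `ν`. -/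
def StronglyThresholdIndexable (ν : ℝ → ℝ) : Prop :=
  P.Indexable ν ∧
    ∀ lam : ℝ, ∃ z : EReal, P.ZPolicyOpt z lam ∧ P.ZmPolicyOpt z lam

/-- PCL-indexability condition (PCLI1). -/
def PCLI1 : Prop := ∀ (x : ℝ) (z : EReal), 0 < P.g x z

/-- PCL-indexability condition (PCLI2). -/
def PCLI2 : Prop :=
  Monotone P.mStar ∧ Continuous P.mStar ∧ BddBelow (Set.range P.mStar)

/-- PCL-indexability condition (PCLI3). -/
def PCLI3 : Prop :=
  ∀ x : ℝ, ∀ ν : Measure ℝ, IsLSMeasureOfAnti (fun z : ℝ => P.G x z) ν →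
    ∀ z₁ z₂ : ℝ, z₁ < z₂ →
      P.F x z₂ - P.F x z₁ = -∫ z in Set.Ioc z₁ z₂, P.mStar z ∂ν

/-- The project is PCL-indexable. -/
def PCLIndexable : Prop := P.PCLI1 ∧ P.PCLI2 ∧ P.PCLI3

/-- Reward metric with initial distribution `p`. -/
def Fp (p : Measure ℝ) (z : EReal) : ℝ := ∫ x, P.F x z ∂p

/-- Resource metric with initial distribution `p`. -/
def Gp (p : Measure ℝ) (z : EReal) : ℝ := ∫ x, P.G x z ∂p

/-- `z⁻`-policy reward metric with initial distribution `p`. -/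
def Fmp (p : Measure ℝ) (z : EReal) : ℝ := ∫ x, P.Fm x z ∂p

/-- `z⁻`-policy resource metric with initial distribution `p`. -/
def Gmp (p : Measure ℝ) (z : EReal) : ℝ := ∫ x, P.Gm x z ∂p

/-- An admissible initial distribution: a probability measure with `∫ w dp < ∞`. -/
def IsInitDist (p : Measure ℝ) : Prop :=
  IsProbabilityMeasure p ∧ Integrable P.w p

/-- The transition kernel of the `z`-policy (active iff `x > z`). -/
def thrKer (z : EReal) : Kernel ℝ ℝ :=
  haveI : DecidablePred (· ∈ {x : ℝ | z < (x : EReal)}) := Classical.decPred _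
  Kernel.piecewise
    (show MeasurableSet {x : ℝ | z < (x : EReal)} from
      measurable_coe_real_ereal measurableSet_Ioi)
    (P.κ true) (P.κ false)

/-- The transition kernel of the `z⁻`-policy (active iff `x ≥ z`). -/
def thrKerM (z : EReal) : Kernel ℝ ℝ :=
  haveI : DecidablePred (· ∈ {x : ℝ | z ≤ (x : EReal)}) := Classical.decPred _
  Kernel.piecewise
    (show MeasurableSet {x : ℝ | z ≤ (x : EReal)} from
      measurable_coe_real_ereal measurableSet_Ici)
    (P.κ true) (P.κ false)

/-- The (discounted) state occupation measure `μ_p^z` of the `z`-policy. -/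
def occ (z : EReal) (p : Measure ℝ) : Measure ℝ :=
  Measure.sum fun t : ℕ => ENNReal.ofReal (P.β ^ t) • kerIter (P.thrKer z) t p

/-- The (discounted) state occupation measure `μ_p^{z⁻}` of the `z⁻`-policy. -/
def occM (z : EReal) (p : Measure ℝ) : Measure ℝ :=
  Measure.sum fun t : ℕ => ENNReal.ofReal (P.β ^ t) • kerIter (P.thrKerM z) t p

end Bandit

/-- Finite-horizon reward metric `F_k(x,z)` (value iteration). -/
def Bandit.Fk (P : Bandit) : ℕ → ℝ → EReal → ℝ
  | 0, x, z => P.r x (decide (z < (x : EReal)))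
  | (k + 1), x, z =>
      P.r x (decide (z < (x : EReal))) +
        P.β * ∫ y, Bandit.Fk P k y z ∂(P.κ (decide (z < (x : EReal))) x)

/-- Finite-horizon resource metric `G_k(x,z)` (value iteration). -/
def Bandit.Gk (P : Bandit) : ℕ → ℝ → EReal → ℝ
  | 0, x, z => P.c x (decide (z < (x : EReal)))
  | (k + 1), x, z =>
      P.c x (decide (z < (x : EReal))) +
        P.β * ∫ y, Bandit.Gk P k y z ∂(P.κ (decide (z < (x : EReal))) x)

/-- Finite-horizon marginal reward metric `f_k(x,z)`. -/
def Bandit.fk (P : Bandit) : ℕ → ℝ → EReal → ℝ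
  | 0, x, _ => P.r x true - P.r x false
  | (k + 1), x, z =>
      (P.r x true - P.r x false) +
        P.β * ((∫ y, P.Fk k y z ∂(P.κ true x)) - ∫ y, P.Fk k y z ∂(P.κ false x))

/-- Finite-horizon marginal resource metric `g_k(x,z)`. -/
def Bandit.gk (P : Bandit) : ℕ → ℝ → EReal → ℝ
  | 0, x, _ => P.c x true - P.c x false
  | (k + 1), x, z =>
      (P.c x true - P.c x false) +
        P.β * ((∫ y, P.Gk k y z ∂(P.κ true x)) - ∫ y, P.Gk k y z ∂(P.κ false x))

namespace Bandit

variable (P : Bandit)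

/-- Finite-horizon MP metric `m_k(x,z)`. -/
def mk' (k : ℕ) (x : ℝ) (z : EReal) : ℝ := P.fk k x z / P.gk k x z

/-- Finite-horizon MP index `m*_k(x)`. -/
def mkStar (k : ℕ) (x : ℝ) : ℝ := P.mk' k x (x : EReal)

/-- `g̲(x,z) = inf_k g_k(x,z)`. -/
def gbar (x : ℝ) (z : EReal) : ℝ := ⨅ k : ℕ, P.gk k x z

end Bandit

/-! The differences `F(·,z) - F(·,z⁻)` and `G(·,z) - G(·,z⁻)` both solve the discounted
equation `D = s·1_{z} + β K D` of the `z⁻`-policy, with point sources `-f(z,z)` and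
`-g(z,z)`: the two policies only disagree at `z`. Solutions of this equation are unique and
monotone in the source (the drift condition makes `β K` a contraction for the `w`-norm), so
`g(z,z)·(F - F⁻) - f(z,z)·(G - G⁻)`, whose source is `0`, vanishes. This gives (a) and,
integrating against the kernels, (b). For (c), `G(·,z) - G(·,z⁻)` also solves the equation of
the `z`-policy with source `-g(z,z⁻)`; comparing the signs of the two solutions at `z` forces
`g(z,z⁻) > 0` once `g(z,z) > 0`. -/

theorem nonneg_of_le_discounted_integral {X : Type*} [MeasurableSpace X] {μ : X → Measure X}
    {w h : X → ℝ} {β γ C : ℝ} (hβ : 0 ≤ β) (hγ₀ : 0 ≤ γ) (hγ₁ : γ < 1) (hw₀ : ∀ x, 0 ≤ w x)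
    (hw : ∀ x, Integrable w (μ x)) (hdrift : ∀ x, β * ∫ y, w y ∂μ x ≤ γ * w x)
    (hm : Measurable h) (hb : ∀ x, |h x| ≤ C * w x)
    (hsuper : ∀ x, β * ∫ y, h y ∂μ x ≤ h x) (x : X) : 0 ≤ h x := by
  set C' := max C 0
  have hint : ∀ x, Integrable h (μ x) := fun x =>
    ((hw x).const_mul C).mono' hm.aestronglyMeasurable
      (ae_of_all _ fun y => by simpa only [Real.norm_eq_abs] using hb y)
  have hiter : ∀ n x, -(C' * γ ^ n * w x) ≤ h x := by
    intro n
    induction n with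
    | zero =>
      intro x
      have hC : C * w x ≤ C' * w x := mul_le_mul_of_nonneg_right (le_max_left C 0) (hw₀ x)
      simp only [pow_zero, mul_one]
      linarith [neg_abs_le (h x), hb x]
    | succ n ih =>
      intro x
      calc -(C' * γ ^ (n + 1) * w x) = -(C' * γ ^ n) * (γ * w x) := by ring
        _ ≤ -(C' * γ ^ n) * (β * ∫ y, w y ∂μ x) :=
          mul_le_mul_of_nonpos_left (hdrift x) (neg_nonpos.mpr (by positivity))
        _ = β * ∫ y, -(C' * γ ^ n * w y) ∂μ x := by
          rw [integral_neg, integral_const_mul]; ring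
        _ ≤ β * ∫ y, h y ∂μ x :=
          mul_le_mul_of_nonneg_left (integral_mono ((hw x).const_mul _).neg (hint x) ih) hβ
        _ ≤ h x := hsuper x
  have hlim : Tendsto (fun n => -(C' * γ ^ n * w x)) atTop (𝓝 0) := by
    simpa using (((tendsto_pow_atTop_nhds_zero_of_lt_one hγ₀ hγ₁).const_mul C').mul_const
      (w x)).neg
  exact le_of_tendsto_of_tendsto' hlim tendsto_const_nhds fun n => hiter n x

theorem integral_sub_eq_mul_integral_sub {X : Type*} [MeasurableSpace X] {μ : Measure X}
    {f₁ g₁ f₂ g₂ : X → ℝ} {k : ℝ} (hf₁ : Integrable f₁ μ) (hg₁ : Integrable g₁ μ)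
    (hf₂ : Integrable f₂ μ) (hg₂ : Integrable g₂ μ) (h : ∀ y, f₁ y - g₁ y = k * (f₂ y - g₂ y)) :
    (∫ y, f₁ y ∂μ) - ∫ y, g₁ y ∂μ = k * ((∫ y, f₂ y ∂μ) - ∫ y, g₂ y ∂μ) := by
  rw [← integral_sub hf₁ hg₁, ← integral_sub hf₂ hg₂, ← integral_const_mul]
  exact integral_congr_ae (ae_of_all _ h)

namespace Bandit

variable (P : Bandit)

def WBounded (h : ℝ → ℝ) : Prop := Measurable h ∧ ∃ C, ∀ x, |h x| ≤ C * P.w x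

namespace WBounded

variable {P} {h k : ℝ → ℝ}

theorem integrable (hh : P.WBounded h) {μ : Measure ℝ} (hw : Integrable P.w μ) :
    Integrable h μ := by
  obtain ⟨hm, C, hC⟩ := hh
  exact (hw.const_mul C).mono' hm.aestronglyMeasurable
    (ae_of_all _ fun y => by simpa only [Real.norm_eq_abs] using hC y)

theorem integrable_kernel (hh : P.WBounded h) (a : Bool) (x : ℝ) : Integrable h (P.κ a x) :=
  hh.integrable (P.hw_int a x)

theorem sub (hh : P.WBounded h) (hk : P.WBounded k) : P.WBounded fun x => h x - k x := by
  obtain ⟨hm, C, hC⟩ := hh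
  obtain ⟨km, D, hD⟩ := hk
  refine ⟨hm.sub km, C + D, fun x => ?_⟩
  calc |h x - k x| ≤ |h x| + |k x| := abs_sub _ _
    _ ≤ (C + D) * P.w x := by linarith [hC x, hD x]

theorem const_mul (hh : P.WBounded h) (c : ℝ) : P.WBounded fun x => c * h x := by
  obtain ⟨hm, C, hC⟩ := hh
  refine ⟨hm.const_mul c, |c| * C, fun x => ?_⟩
  rw [abs_mul, mul_assoc]
  exact mul_le_mul_of_nonneg_left (hC x) (abs_nonneg c)

end WBounded

theorem wBounded_F (z : EReal) : P.WBounded fun x => P.F x z := ⟨P.hF_meas z, P.hF_bdd z⟩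

theorem wBounded_Fm (z : EReal) : P.WBounded fun x => P.Fm x z := ⟨P.hFm_meas z, P.hFm_bdd z⟩

theorem wBounded_G (z : EReal) : P.WBounded fun x => P.G x z := ⟨P.hG_meas z, P.hG_bdd z⟩

theorem wBounded_Gm (z : EReal) : P.WBounded fun x => P.Gm x z := ⟨P.hGm_meas z, P.hGm_bdd z⟩

def IsPolicyMetric (ρ : ℝ → Bool → ℝ) (act : ℝ → Bool) (Φ : ℝ → ℝ) : Prop :=
  ∀ x, Φ x = ρ x (act x) + P.β * ∫ y, Φ y ∂(P.κ (act x) x)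

def marginal (ρ : ℝ → Bool → ℝ) (Φ : ℝ → ℝ) (x : ℝ) : ℝ :=
  (ρ x true - ρ x false) + P.β * ((∫ y, Φ y ∂(P.κ true x)) - ∫ y, Φ y ∂(P.κ false x))

/-- The solution is `s` times the discounted expected number of visits to `z` under `act`. -/
def IsPointSourceSolution (act : ℝ → Bool) (z s : ℝ) (D : ℝ → ℝ) : Prop :=
  P.WBounded D ∧ ∀ x, D x = (if x = z then s else 0) + P.β * ∫ y, D y ∂(P.κ (act x) x)

namespace IsPointSourceSolution

variable {P} {act : ℝ → Bool} {z s t : ℝ} {D E : ℝ → ℝ}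

theorem nonneg (hD : P.IsPointSourceSolution act z s D) (hs : 0 ≤ s) (x : ℝ) : 0 ≤ D x := by
  obtain ⟨⟨hm, C, hC⟩, heq⟩ := hD
  refine nonneg_of_le_discounted_integral P.hβ0 (P.hβ0.trans P.hβγ) P.hγ1
    (fun x => zero_le_one.trans (P.hw_one x)) (fun x => P.hw_int (act x) x)
    (fun x => P.hw_drift (act x) x) hm hC (fun x => ?_) x
  rw [heq x]
  split_ifs <;> linarith

theorem le_apply_self (hD : P.IsPointSourceSolution act z s D) (hs : 0 ≤ s) : s ≤ D z := by
  have hint : 0 ≤ ∫ y, D y ∂(P.κ (act z) z) := integral_nonneg (hD.nonneg hs)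
  rw [hD.2 z, if_pos rfl]
  linarith [mul_nonneg P.hβ0 hint]

theorem const_mul (hD : P.IsPointSourceSolution act z s D) (c : ℝ) :
    P.IsPointSourceSolution act z (c * s) fun x => c * D x := by
  refine ⟨hD.1.const_mul c, fun x => ?_⟩
  dsimp only
  rw [hD.2 x, integral_const_mul]
  split_ifs <;> ring

theorem sub (hD : P.IsPointSourceSolution act z s D) (hE : P.IsPointSourceSolution act z t E) :
    P.IsPointSourceSolution act z (s - t) fun x => D x - E x := by
  refine ⟨hD.1.sub hE.1, fun x => ?_⟩
  dsimp only
  rw [hD.2 x, hE.2 x,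
    integral_sub (hD.1.integrable_kernel (act x) x) (hE.1.integrable_kernel (act x) x)]
  split_ifs <;> ring

theorem eq_zero (hD : P.IsPointSourceSolution act z s D) (hs : s = 0) (x : ℝ) : D x = 0 := by
  subst hs
  have hneg := (hD.const_mul (-1)).nonneg (by norm_num) x
  linarith [hD.nonneg le_rfl x]

end IsPointSourceSolution

theorem isPointSourceSolution_sub_of_switch {ρ : ℝ → Bool → ℝ} {act₁ act₂ : ℝ → Bool} {z : ℝ}
    {Φ Ψ : ℝ → ℝ} (hact : ∀ x, x ≠ z → act₁ x = act₂ x) (h₁ : act₁ z = false)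
    (h₂ : act₂ z = true) (hΦ : P.IsPolicyMetric ρ act₁ Φ) (hΨ : P.IsPolicyMetric ρ act₂ Ψ)
    (hΦb : P.WBounded Φ) (hΨb : P.WBounded Ψ) :
    P.IsPointSourceSolution act₂ z (-P.marginal ρ Φ z) (fun x => Φ x - Ψ x) ∧
      P.IsPointSourceSolution act₁ z (-P.marginal ρ Ψ z) (fun x => Φ x - Ψ x) := by
  refine ⟨⟨hΦb.sub hΨb, fun x => ?_⟩, ⟨hΦb.sub hΨb, fun x => ?_⟩⟩ <;>
  · dsimp only
    rw [integral_sub (hΦb.integrable_kernel _ x) (hΨb.integrable_kernel _ x), hΦ x, hΨ x]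
    by_cases hx : x = z
    · subst hx
      rw [if_pos rfl, h₁, h₂, marginal]
      ring
    · rw [if_neg hx, hact x hx]
      ring

theorem marginal_sub_marginal_eq_mul {ρ σ : ℝ → Bool → ℝ} {Φ₁ Ψ₁ Φ₂ Ψ₂ : ℝ → ℝ} {k : ℝ}
    (hΦ₁ : P.WBounded Φ₁) (hΨ₁ : P.WBounded Ψ₁) (hΦ₂ : P.WBounded Φ₂) (hΨ₂ : P.WBounded Ψ₂)
    (h : ∀ y, Φ₁ y - Ψ₁ y = k * (Φ₂ y - Ψ₂ y)) (x : ℝ) :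
    P.marginal ρ Φ₁ x - P.marginal ρ Ψ₁ x = k * (P.marginal σ Φ₂ x - P.marginal σ Ψ₂ x) := by
  have hint : ∀ a, (∫ y, Φ₁ y ∂(P.κ a x)) - ∫ y, Ψ₁ y ∂(P.κ a x) =
      k * ((∫ y, Φ₂ y ∂(P.κ a x)) - ∫ y, Ψ₂ y ∂(P.κ a x)) := fun a =>
    integral_sub_eq_mul_integral_sub (hΦ₁.integrable_kernel a x) (hΨ₁.integrable_kernel a x)
      (hΦ₂.integrable_kernel a x) (hΨ₂.integrable_kernel a x) h
  simp only [marginal]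
  linear_combination P.β * hint true - P.β * hint false

theorem decide_coe_lt_eq_decide_coe_le {z x : ℝ} (hx : x ≠ z) :
    decide ((z : EReal) < x) = decide ((z : EReal) ≤ x) := by
  refine decide_eq_decide.mpr ⟨le_of_lt, fun h => h.lt_of_ne ?_⟩
  exact_mod_cast hx.symm

theorem isPointSourceSolution_F_sub_Fm (z : ℝ) :
    P.IsPointSourceSolution (fun x => decide ((z : EReal) ≤ x)) z (-P.f z z)
      fun x => P.F x z - P.Fm x z :=
  (P.isPointSourceSolution_sub_of_switch (fun _ => decide_coe_lt_eq_decide_coe_le)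
    (by simp) (by simp) (fun x => P.hF_eq x z) (fun x => P.hFm_eq x z)
    (P.wBounded_F z) (P.wBounded_Fm z)).1

theorem isPointSourceSolution_G_sub_Gm (z : ℝ) :
    P.IsPointSourceSolution (fun x => decide ((z : EReal) ≤ x)) z (-P.g z z)
        (fun x => P.G x z - P.Gm x z) ∧
      P.IsPointSourceSolution (fun x => decide ((z : EReal) < x)) z (-P.gm z z)
        fun x => P.G x z - P.Gm x z :=
  P.isPointSourceSolution_sub_of_switch (fun _ => decide_coe_lt_eq_decide_coe_le)
    (by simp) (by simp) (fun x => P.hG_eq x z) (fun x => P.hGm_eq x z)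
    (P.wBounded_G z) (P.wBounded_Gm z)

theorem g_mul_F_sub_Fm (z x : ℝ) :
    P.g z z * (P.F x z - P.Fm x z) = P.f z z * (P.G x z - P.Gm x z) := by
  have hzero := ((P.isPointSourceSolution_F_sub_Fm z).const_mul (P.g z z)).sub
    ((P.isPointSourceSolution_G_sub_Gm z).1.const_mul (P.f z z))
  exact sub_eq_zero.mp (hzero.eq_zero (by ring) x)

theorem F_sub_Fm_eq_mStar_mul {z : ℝ} (hg : P.g z z ≠ 0) (x : ℝ) :
    P.F x z - P.Fm x z = P.mStar z * (P.G x z - P.Gm x z) := by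
  rw [mStar, m, div_mul_eq_mul_div, eq_div_iff hg, ← P.g_mul_F_sub_Fm z x]
  ring

theorem gm_pos_of_g_pos {z : ℝ} (hg : 0 < P.g z z) : 0 < P.gm z z := by
  obtain ⟨hweak, hstrict⟩ := P.isPointSourceSolution_G_sub_Gm z
  by_contra! hgm
  have hneg := (hweak.const_mul (-1)).le_apply_self (by linarith)
  have hnonneg := hstrict.nonneg (by linarith) z
  linarith

end Bandit

/-- Under (PCLI1): (a) jumps of `F(p,·)` are `m*` times jumps of `G(p,·)`;
(b) jumps of `f(x,·)` are `m*` times jumps of `g(x,·)`;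
(c) `g(x,x⁻) > 0` and `m(x,x⁻) = m(x,x) = m*(x)`,
i.e. `f(x,x⁻) = m*(x)·g(x,x⁻)`. -/
theorem jump_relations (P : Bandit) (h1 : P.PCLI1) :
    (∀ p : Measure ℝ, P.IsInitDist p → ∀ z : ℝ,
      P.Fp p z - P.Fmp p z = P.mStar z * (P.Gp p z - P.Gmp p z)) ∧
    (∀ x z : ℝ, P.f x z - P.fm x z = P.mStar z * (P.g x z - P.gm x z)) ∧
    (∀ x : ℝ, 0 < P.gm x x ∧ P.mm x x = P.mStar x ∧
      P.fm x x = P.mStar x * P.gm x x) := by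
  have jump : ∀ z x : ℝ, P.F x z - P.Fm x z = P.mStar z * (P.G x z - P.Gm x z) :=
    fun z => P.F_sub_Fm_eq_mStar_mul (h1 z z).ne'
  have marginal_jump : ∀ x z : ℝ, P.f x z - P.fm x z = P.mStar z * (P.g x z - P.gm x z) :=
    fun x z => P.marginal_sub_marginal_eq_mul (P.wBounded_F z) (P.wBounded_Fm z)
      (P.wBounded_G z) (P.wBounded_Gm z) (jump z) x
  refine ⟨fun p hp z => ?_, marginal_jump, fun x => ?_⟩
  · exact integral_sub_eq_mul_integral_sub ((P.wBounded_F z).integrable hp.2)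
      ((P.wBounded_Fm z).integrable hp.2) ((P.wBounded_G z).integrable hp.2)
      ((P.wBounded_Gm z).integrable hp.2) (jump z)
  · have hgm : 0 < P.gm x x := P.gm_pos_of_g_pos (h1 x x)
    have hf : P.f x x = P.mStar x * P.g x x := (div_mul_cancel₀ _ (h1 x x).ne').symm
    have hfm : P.fm x x = P.mStar x * P.gm x x := by linarith [marginal_jump x x]
    exact ⟨hgm, by rw [Bandit.mm, hfm, mul_div_cancel_right₀ _ hgm.ne'], hfm⟩
end
end

section
/- Assume condition (PCLI1). Then for every initial distribution p on ℝ with ∫ w dp < ∞ and every state x, the functions z ↦ G(p,z) and z ↦ g(x,z) have bounded variation on ℝ. -/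
open MeasureTheory ProbabilityTheory Filter Topology Set

noncomputable section

section Aux

open MeasureTheory

namespace Bandit

variable (P : Bandit)

lemma wpos (x : ℝ) : 0 < P.w x := lt_of_lt_of_le one_pos (P.hw_one x)

lemma hγ0 : 0 ≤ P.γ := P.hβ0.trans P.hβγ

lemma integrable_wb {h : ℝ → ℝ} (hm : Measurable h) {C : ℝ}
    (hb : ∀ x, |h x| ≤ C * P.w x) {μ : Measure ℝ} (hw : Integrable P.w μ) :
    Integrable h μ :=
  (hw.const_mul C).mono' hm.aestronglyMeasurable
    (Filter.Eventually.of_forall fun x => by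
      rw [Real.norm_eq_abs]
      exact hb x)

lemma hc_nonneg (x : ℝ) (a : Bool) : 0 ≤ P.c x a := by
  cases a
  · exact P.hc0 x
  · exact (P.hc0 x).trans (P.hc01 x).le

/-- Uniform (in `z`) bound on the resource metric. -/
lemma G_unif_bdd (x : ℝ) (z : EReal) : |P.G x z| ≤ (P.M / (1 - P.γ)) * P.w x := by
  obtain ⟨C, hC⟩ := P.hG_bdd z
  set B := P.M / (1 - P.γ) with hBdef
  have h1γ : 0 < 1 - P.γ := by linarith [P.hγ1]
  have hB0 : 0 ≤ B := div_nonneg P.hM.le h1γ.le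
  have hBfix : P.M + P.γ * B = B := by
    rw [hBdef]; field_simp; ring
  set C' := max C 0 with hC'def
  have hC'0 : 0 ≤ C' := le_max_right _ _
  have hCb : ∀ y : ℝ, |P.G y z| ≤ C' * P.w y := fun y =>
    (hC y).trans (mul_le_mul_of_nonneg_right (le_max_left _ _) (P.wpos y).le)
  have key : ∀ t : ℕ, ∀ y : ℝ, |P.G y z| ≤ B * P.w y + P.γ ^ t * C' * P.w y := by
    intro t
    induction t with
    | zero =>
      intro y
      have := hCb y
      have hw0 := (P.wpos y).le
      nlinarith
    | succ t ih =>
      intro y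
      set a : Bool := decide (z < (y : EReal)) with ha
      have hwint := P.hw_int a y
      have hGint : Integrable (fun u => P.G u z) (P.κ a y) :=
        P.integrable_wb (P.hG_meas z) hC hwint
      have hcb : |P.c y a| ≤ P.M * P.w y := by
        rw [abs_of_nonneg (P.hc_nonneg y a)]; exact P.hc_bd y a
      have hIab : |∫ u, P.G u z ∂(P.κ a y)| ≤ ∫ u, |P.G u z| ∂(P.κ a y) := by
        simpa [Real.norm_eq_abs] using
          norm_integral_le_integral_norm (μ := P.κ a y) (fun u => P.G u z)
      have hImono : ∫ u, |P.G u z| ∂(P.κ a y)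
          ≤ ∫ u, (B + P.γ ^ t * C') * P.w u ∂(P.κ a y) := by
        refine integral_mono hGint.abs (hwint.const_mul _) fun u => ?_
        have := ih u; nlinarith
      have hIconst : ∫ u, (B + P.γ ^ t * C') * P.w u ∂(P.κ a y)
          = (B + P.γ ^ t * C') * ∫ u, P.w u ∂(P.κ a y) := integral_const_mul _ _
      have hdrift := P.hw_drift a y
      have hpos : 0 ≤ B + P.γ ^ t * C' := add_nonneg hB0 (mul_nonneg (pow_nonneg P.hγ0 t) hC'0)
      have step : P.β * |∫ u, P.G u z ∂(P.κ a y)|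
          ≤ (B + P.γ ^ t * C') * (P.γ * P.w y) := by
        calc P.β * |∫ u, P.G u z ∂(P.κ a y)|
            ≤ P.β * ((B + P.γ ^ t * C') * ∫ u, P.w u ∂(P.κ a y)) := by
              refine mul_le_mul_of_nonneg_left ?_ P.hβ0
              exact hIab.trans (hImono.trans_eq hIconst)
          _ = (B + P.γ ^ t * C') * (P.β * ∫ u, P.w u ∂(P.κ a y)) := by ring
          _ ≤ (B + P.γ ^ t * C') * (P.γ * P.w y) :=
              mul_le_mul_of_nonneg_left hdrift hpos
      have heq := P.hG_eq y z
      rw [← ha] at heq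
      have habs : |P.G y z| ≤ |P.c y a| + P.β * |∫ u, P.G u z ∂(P.κ a y)| := by
        rw [heq]
        refine (abs_add_le _ _).trans ?_
        rw [abs_mul, abs_of_nonneg P.hβ0]
      have hpow : P.γ ^ (t+1) = P.γ ^ t * P.γ := pow_succ _ _
      have heq2 : P.M * P.w y + (B + P.γ ^ t * C') * (P.γ * P.w y)
          = B * P.w y + P.γ ^ (t+1) * C' * P.w y := by
        rw [hpow]; linear_combination (P.w y) * hBfix
      linarith [habs, step, hcb]
  have htend : Filter.Tendsto (fun t : ℕ => B * P.w x + P.γ ^ t * C' * P.w x)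
      Filter.atTop (nhds (B * P.w x)) := by
    have h0 : Filter.Tendsto (fun t : ℕ => P.γ ^ t) Filter.atTop (nhds 0) :=
      tendsto_pow_atTop_nhds_zero_of_lt_one P.hγ0 P.hγ1
    have := ((h0.mul_const C').mul_const (P.w x)).const_add (B * P.w x)
    simpa using this
  exact ge_of_tendsto' htend fun t => key t x

/-- `G(x,·)` is antitone under (PCLI1). -/
lemma G_anti (h1 : P.PCLI1) (x : ℝ) {z₁ z₂ : EReal} (hz : z₁ ≤ z₂) :
    P.G x z₂ ≤ P.G x z₁ := by
  set D : ℝ → ℝ := fun y => P.G y z₁ - P.G y z₂ with hD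
  obtain ⟨C₁, hC₁⟩ := P.hG_bdd z₁
  obtain ⟨C₂, hC₂⟩ := P.hG_bdd z₂
  set Cm := max (C₁ + C₂) 0 with hCm
  have hCm0 : 0 ≤ Cm := le_max_right _ _
  have hDb : ∀ y, |D y| ≤ Cm * P.w y := by
    intro y
    have h := (abs_sub (P.G y z₁) (P.G y z₂)).trans (add_le_add (hC₁ y) (hC₂ y))
    calc |D y| ≤ (C₁ + C₂) * P.w y := by rw [hD]; simpa [add_mul] using h
      _ ≤ Cm * P.w y := mul_le_mul_of_nonneg_right (le_max_left _ _) (P.wpos y).le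
  have hDmeas : Measurable D := (P.hG_meas z₁).sub (P.hG_meas z₂)
  have hDint : ∀ (a : Bool) (y : ℝ), Integrable D (P.κ a y) := fun a y =>
    P.integrable_wb hDmeas hDb (P.hw_int a y)
  have hGint : ∀ (z : EReal) (a : Bool) (y : ℝ),
      Integrable (fun u => P.G u z) (P.κ a y) := by
    intro z a y
    obtain ⟨C, hC⟩ := P.hG_bdd z
    exact P.integrable_wb (P.hG_meas z) hC (P.hw_int a y)
  have key : ∀ y : ℝ, P.β * ∫ u, D u ∂(P.κ (decide (z₁ < (y : EReal))) y) ≤ D y := by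
    intro y
    by_cases h2 : z₂ < (y : EReal)
    · have hlt1 : z₁ < (y : EReal) := lt_of_le_of_lt hz h2
      have e1 : decide (z₁ < (y : EReal)) = true := decide_eq_true hlt1
      have e2 : decide (z₂ < (y : EReal)) = true := decide_eq_true h2
      have heq1 := P.hG_eq y z₁; rw [e1] at heq1
      have heq2 := P.hG_eq y z₂; rw [e2] at heq2
      have hsub : ∫ u, D u ∂(P.κ true y)
          = (∫ u, P.G u z₁ ∂(P.κ true y)) - ∫ u, P.G u z₂ ∂(P.κ true y) :=
        integral_sub (hGint z₁ true y) (hGint z₂ true y)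
      rw [e1, hsub, hD]
      simp only
      rw [heq1, heq2]; ring_nf; exact le_refl _
    · by_cases hlt1 : z₁ < (y : EReal)
      · have e1 : decide (z₁ < (y : EReal)) = true := decide_eq_true hlt1
        have e2 : decide (z₂ < (y : EReal)) = false := decide_eq_false h2
        have heq1 := P.hG_eq y z₁; rw [e1] at heq1
        have heq2 := P.hG_eq y z₂; rw [e2] at heq2
        have hsub : ∫ u, D u ∂(P.κ true y)
            = (∫ u, P.G u z₁ ∂(P.κ true y)) - ∫ u, P.G u z₂ ∂(P.κ true y) :=
          integral_sub (hGint z₁ true y) (hGint z₂ true y)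
        have hg := h1 y z₂
        rw [Bandit.g] at hg
        rw [e1, hsub, hD]
        simp only
        rw [heq1, heq2]
        nlinarith
      · have e1 : decide (z₁ < (y : EReal)) = false := decide_eq_false hlt1
        have e2 : decide (z₂ < (y : EReal)) = false := decide_eq_false h2
        have heq1 := P.hG_eq y z₁; rw [e1] at heq1
        have heq2 := P.hG_eq y z₂; rw [e2] at heq2
        have hsub : ∫ u, D u ∂(P.κ false y)
            = (∫ u, P.G u z₁ ∂(P.κ false y)) - ∫ u, P.G u z₂ ∂(P.κ false y) :=
          integral_sub (hGint z₁ false y) (hGint z₂ false y)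
        rw [e1, hsub, hD]
        simp only
        rw [heq1, heq2]; ring_nf; exact le_refl _
  have claim : ∀ t : ℕ, ∀ y : ℝ, -(Cm * P.γ ^ t) * P.w y ≤ D y := by
    intro t
    induction t with
    | zero =>
      intro y
      have := neg_abs_le (D y)
      have := hDb y
      nlinarith
    | succ t ih =>
      intro y
      set a : Bool := decide (z₁ < (y : EReal)) with ha
      have hwint := P.hw_int a y
      have hImono : -(Cm * P.γ ^ t) * ∫ u, P.w u ∂(P.κ a y) ≤ ∫ u, D u ∂(P.κ a y) := by
        rw [← integral_const_mul]
        exact integral_mono (hwint.const_mul _) (hDint a y) fun u => ih u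
      have hdrift := P.hw_drift a y
      have hk := key y
      rw [← ha] at hk
      have hγt : (0:ℝ) ≤ Cm * P.γ ^ t := mul_nonneg hCm0 (pow_nonneg P.hγ0 t)
      have hpow : P.γ ^ (t+1) = P.γ ^ t * P.γ := pow_succ _ _
      have hA : -(Cm * P.γ ^ t) * (P.γ * P.w y)
          ≤ -(Cm * P.γ ^ t) * (P.β * ∫ u, P.w u ∂(P.κ a y)) :=
        mul_le_mul_of_nonpos_left hdrift (neg_nonpos.2 hγt)
      have hB : P.β * (-(Cm * P.γ ^ t) * ∫ u, P.w u ∂(P.κ a y))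
          ≤ P.β * ∫ u, D u ∂(P.κ a y) :=
        mul_le_mul_of_nonneg_left hImono P.hβ0
      rw [hpow]
      nlinarith [hA, hB, hk]
  have htend : Filter.Tendsto (fun t : ℕ => -(Cm * P.γ ^ t) * P.w x)
      Filter.atTop (nhds 0) := by
    have h0 : Filter.Tendsto (fun t : ℕ => P.γ ^ t) Filter.atTop (nhds 0) :=
      tendsto_pow_atTop_nhds_zero_of_lt_one P.hγ0 P.hγ1
    have := ((h0.const_mul Cm).neg.mul_const (P.w x))
    simpa using this
  have h0le : (0:ℝ) ≤ D x := le_of_tendsto' htend fun t => claim t x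
  rw [hD] at h0le
  simpa using h0le

lemma absint_G (z : EReal) {μ : Measure ℝ} (hw : Integrable P.w μ) :
    |∫ y, P.G y z ∂μ| ≤ (P.M / (1 - P.γ)) * ∫ y, P.w y ∂μ := by
  have hint : Integrable (fun y => P.G y z) μ :=
    P.integrable_wb (P.hG_meas z) (fun y => P.G_unif_bdd y z) hw
  calc |∫ y, P.G y z ∂μ| ≤ ∫ y, |P.G y z| ∂μ := by
        simpa [Real.norm_eq_abs] using
          norm_integral_le_integral_norm (μ := μ) (fun y => P.G y z)
    _ ≤ ∫ y, (P.M / (1 - P.γ)) * P.w y ∂μ :=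
        integral_mono hint.abs (hw.const_mul _) fun y => P.G_unif_bdd y z
    _ = (P.M / (1 - P.γ)) * ∫ y, P.w y ∂μ := integral_const_mul _ _

lemma int_G_anti (h1 : P.PCLI1) {μ : Measure ℝ} (hw : Integrable P.w μ)
    {z₁ z₂ : EReal} (hz : z₁ ≤ z₂) :
    ∫ y, P.G y z₂ ∂μ ≤ ∫ y, P.G y z₁ ∂μ :=
  integral_mono
    (P.integrable_wb (P.hG_meas z₂) (fun y => P.G_unif_bdd y z₂) hw)
    (P.integrable_wb (P.hG_meas z₁) (fun y => P.G_unif_bdd y z₁) hw)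
    (fun y => P.G_anti h1 y hz)

end Bandit

/-- A function dominated (in increments) by a bounded antitone function has
bounded variation on `ℝ`. -/
lemma bv_of_dominated {f φ : ℝ → ℝ} {K : ℝ} (hb : ∀ z, |φ z| ≤ K)
    (h : ∀ z₁ z₂ : ℝ, z₁ ≤ z₂ → |f z₂ - f z₁| ≤ φ z₁ - φ z₂) :
    BoundedVariationOn f Set.univ := by
  have hle : eVariationOn f Set.univ ≤ ENNReal.ofReal (2 * K) := by
    apply iSup_le
    rintro ⟨n, u, hu, -⟩
    calc ∑ i ∈ Finset.range n, edist (f (u (i+1))) (f (u i))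
        ≤ ∑ i ∈ Finset.range n, ENNReal.ofReal (φ (u i) - φ (u (i+1))) := by
          refine Finset.sum_le_sum fun i _ => ?_
          rw [edist_dist, Real.dist_eq]
          exact ENNReal.ofReal_le_ofReal (h _ _ (hu (Nat.le_succ i)))
      _ = ENNReal.ofReal (∑ i ∈ Finset.range n, (φ (u i) - φ (u (i+1)))) := by
          rw [ENNReal.ofReal_sum_of_nonneg]
          intro i _
          exact le_trans (abs_nonneg _) (h _ _ (hu (Nat.le_succ i)))
      _ = ENNReal.ofReal (φ (u 0) - φ (u n)) := by
          rw [Finset.sum_range_sub' fun i => φ (u i)]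
      _ ≤ ENNReal.ofReal (2 * K) := ENNReal.ofReal_le_ofReal (by
          have h0 := abs_le.1 (hb (u 0))
          have hn := abs_le.1 (hb (u n))
          linarith)
  exact (hle.trans_lt ENNReal.ofReal_lt_top).ne

end Aux


/-- Under (PCLI1), the resource metrics `G(p,·)` and `g(x,·)` have bounded
variation on `ℝ`. -/
theorem resource_metrics_boundedVariation (P : Bandit) (h1 : P.PCLI1) :
    (∀ p : Measure ℝ, P.IsInitDist p →
      BoundedVariationOn (fun z : ℝ => P.Gp p z) Set.univ) ∧
    (∀ x : ℝ, BoundedVariationOn (fun z : ℝ => P.g x z) Set.univ) := by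
  constructor
  · rintro p ⟨hp, hw⟩
    have hanti : ∀ z₁ z₂ : ℝ, z₁ ≤ z₂ → P.Gp p z₂ ≤ P.Gp p z₁ := fun z₁ z₂ h =>
      P.int_G_anti h1 hw (EReal.coe_le_coe_iff.2 h)
    refine bv_of_dominated (φ := fun z : ℝ => P.Gp p z)
      (K := (P.M / (1 - P.γ)) * ∫ y, P.w y ∂p)
      (fun z => by simpa [Bandit.Gp] using P.absint_G (z : EReal) hw) ?_
    intro z₁ z₂ h
    rw [abs_sub_comm, abs_of_nonneg (sub_nonneg.2 (hanti z₁ z₂ h))]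
  · intro x
    set Ht : ℝ → ℝ := fun z => ∫ y, P.G y (z : EReal) ∂(P.κ true x) with hHt
    set Hf : ℝ → ℝ := fun z => ∫ y, P.G y (z : EReal) ∂(P.κ false x) with hHf
    refine bv_of_dominated (φ := fun z => P.β * (Ht z + Hf z))
      (K := P.β * ((P.M / (1 - P.γ)) * ∫ y, P.w y ∂(P.κ true x) +
        (P.M / (1 - P.γ)) * ∫ y, P.w y ∂(P.κ false x))) ?_ ?_
    · intro z
      have h1t := P.absint_G (z : EReal) (P.hw_int true x)
      have h1f := P.absint_G (z : EReal) (P.hw_int false x)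
      rw [abs_mul, abs_of_nonneg P.hβ0]
      exact mul_le_mul_of_nonneg_left
        ((abs_add_le _ _).trans (add_le_add h1t h1f)) P.hβ0
    · intro z₁ z₂ h
      have hc : (z₁ : EReal) ≤ (z₂ : EReal) := EReal.coe_le_coe_iff.2 h
      have ht : Ht z₂ ≤ Ht z₁ := P.int_G_anti h1 (P.hw_int true x) hc
      have hf : Hf z₂ ≤ Hf z₁ := P.int_G_anti h1 (P.hw_int false x) hc
      have hgdiff : P.g x (z₂ : EReal) - P.g x (z₁ : EReal)
          = P.β * ((Ht z₂ - Ht z₁) - (Hf z₂ - Hf z₁)) := by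
        simp only [Bandit.g, hHt, hHf]; ring
      show |P.g x (z₂ : EReal) - P.g x (z₁ : EReal)|
          ≤ P.β * (Ht z₁ + Hf z₁) - P.β * (Ht z₂ + Hf z₂)
      rw [hgdiff, abs_mul, abs_of_nonneg P.hβ0]
      have habs : |(Ht z₂ - Ht z₁) - (Hf z₂ - Hf z₁)|
          ≤ (Ht z₁ - Ht z₂) + (Hf z₁ - Hf z₂) := by
        refine (abs_sub _ _).trans ?_
        rw [abs_of_nonpos (by linarith), abs_of_nonpos (by linarith)]
        ring_nf
        exact le_refl _
      nlinarith [mul_le_mul_of_nonneg_left habs P.hβ0]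
end
end
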